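/- Assume F̄(β(t))/F̄(γ(t)) → g ∈ (0,1) and F̄(α_{k,0}(t))/F̄(β(t)) → a_{k,0} ∈ (0,1]. Then for k ≥ 0, with z > 0 and z_β = z/F̄(β(t)), the limit lim_{t→∞} P{ν ≥ z_β, N_+(ν) = k, N_-(ν) = 0} = (g(1−g)^k a_{k,0}/k!) · ∫_{z/g}^∞ v^k e^{−v} dv. -/

import Mathlib

open MeasureTheory ProbabilityTheory Filter Set

/-- Numbers `(N₊(n), N₋(n))` of strengthening resp. weakening (harmful nonfatal) shocks
among the first `n` shocks `X 0, …, X (n-1)`. -/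
noncomputable def shockCounts (γ β α : ℝ) (b c : ℕ → ℝ) (X : ℕ → ℝ) : ℕ → ℕ × ℕ
  | 0 => (0, 0)
  | n + 1 =>
      let p := shockCounts γ β α b c X n
      (if γ ≤ X n ∧ X n < β ∧ p.2 = 0 then p.1 + 1 else p.1,
       if β ≤ X n ∧ X n < α + b p.1 - c p.2 then p.2 + 1 else p.2)

/-- The `(i+1)`-th shock `X i` is fatal: it exceeds the current critical boundary. -/
def fatalShock (γ β α : ℝ) (b c : ℕ → ℝ) (X : ℕ → ℝ) (i : ℕ) : Prop :=
  α + b (shockCounts γ β α b c X i).1 - c (shockCounts γ β α b c X i).2 ≤ X i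

/-- 0-based index of the first fatal shock (junk value if there is none);
the paper's `ν` equals this plus one. -/
noncomputable def nuShock (γ β α : ℝ) (b c : ℕ → ℝ) (X : ℕ → ℝ) : ℕ :=
  sInf {i | fatalShock γ β α b c X i}

/-- Survival function `F̄(x) = P(X > x)` of a law `μ` on `ℝ`, as a real number. -/
noncomputable def survival (μ : Measure ℝ) (x : ℝ) : ℝ := (μ (Set.Ioi x)).toReal

/-!
The first fatal shock is `X m` with `N₊ = k`, `N₋ = 0` exactly when `X 0, …, X (m-1)` all lie
below `β`, exactly `k` of them in `[γ, β)`, and `X m ≥ α_{k,0}`; by independence this has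
probability `C(m,k) (F̄γ - F̄β)^k F(γ)^(m-k) F̄(α_{k,0})`. Summing over `m ≥ M = ⌈z_β - 1⌉`
and using the duality "the `(k+1)`-st success comes after trial `M` iff `Bin(M, F̄γ) ≤ k`"
gives the closed form
`P(Bin(M, F̄γ) ≤ k) (F̄γ - F̄β)^k F̄(α_{k,0}) / F̄γ^(k+1)`. Since `M F̄γ → z/g`, the Poisson limit
turns the binomial CDF into `e^(-z/g) ∑_{j ≤ k} (z/g)^j / j!`, which is
`(1/k!) ∫_{z/g}^∞ v^k e^(-v) dv`, while the remaining factor tends to `(1-g)^k a_{k,0} g`.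
-/

open scoped Topology Asymptotics

noncomputable def binomialCDF (u : ℝ) (M k : ℕ) : ℝ :=
  ∑ j ∈ Finset.range (k + 1), M.choose j * u ^ j * (1 - u) ^ (M - j)

theorem binomialCDF_sub_binomialCDF_succ (u : ℝ) (M k : ℕ) :
    binomialCDF u M k - binomialCDF u (M + 1) k
      = M.choose k * u ^ (k + 1) * (1 - u) ^ (M - k) := by
  induction k with
  | zero => simp [binomialCDF, pow_succ]; ring
  | succ k ih =>
    simp only [binomialCDF] at ih ⊢
    rw [Finset.sum_range_succ, Finset.sum_range_succ (n := k + 1), Nat.choose_succ_succ',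
      Nat.add_sub_add_right]
    rcases lt_or_ge k M with hkM | hMk
    · rw [show M - k = M - (k + 1) + 1 by omega] at ih ⊢
      push_cast
      linear_combination ih
    · rw [Nat.choose_eq_zero_of_lt (by omega : M < k + 1), Nat.sub_eq_zero_of_le hMk] at *
      push_cast
      linear_combination ih

theorem hasSum_sub_succ_of_antitone {f : ℕ → ℝ} {a : ℝ} (hf : Antitone f)
    (hlim : Tendsto f atTop (𝓝 a)) : HasSum (fun n => f n - f (n + 1)) (f 0 - a) := by
  rw [hasSum_iff_tendsto_nat_of_nonneg fun n => sub_nonneg.mpr (hf n.le_succ)]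
  simp_rw [Finset.sum_range_sub']
  exact tendsto_const_nhds.sub hlim

theorem tendsto_binomialCDF_atTop {u : ℝ} (hu : |1 - u| < 1) (k : ℕ) :
    Tendsto (fun M => binomialCDF u M k) atTop (𝓝 0) := by
  have hterm : ∀ j, Tendsto (fun M : ℕ => (M.choose j : ℝ) * (1 - u) ^ (M - j)) atTop (𝓝 0) := by
    intro j
    rw [← tendsto_add_atTop_iff_nat j]
    simp only [Nat.add_sub_cancel]
    exact (summable_choose_mul_geometric_of_norm_lt_one (R := ℝ) j hu).tendsto_atTop_zero
  have h := tendsto_finsetSum (Finset.range (k + 1)) fun j _ => (hterm j).mul_const (u ^ j)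
  simp only [zero_mul, Finset.sum_const_zero] at h
  refine h.congr fun M => Finset.sum_congr rfl fun j _ => ?_
  ring

theorem hasSum_choose_mul_pow_binomialCDF {u : ℝ} (hu0 : 0 < u) (hu1 : u ≤ 1) (M k : ℕ) :
    HasSum (fun m => ((M + m).choose k : ℝ) * u ^ (k + 1) * (1 - u) ^ (M + m - k))
      (binomialCDF u M k) := by
  have hanti : Antitone fun m => binomialCDF u (M + m) k := by
    refine antitone_nat_of_succ_le fun m => sub_nonneg.mp ?_
    rw [← add_assoc, binomialCDF_sub_binomialCDF_succ]
    have : 0 ≤ 1 - u := by linarith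
    positivity
  have hlim : Tendsto (fun m => binomialCDF u (M + m) k) atTop (𝓝 0) :=
    ((tendsto_binomialCDF_atTop (by rw [abs_lt]; constructor <;> linarith) k).comp
      (tendsto_add_atTop_nat M)).congr fun m => by simp [add_comm]
  convert hasSum_sub_succ_of_antitone hanti hlim using 1
  · ext m
    rw [← add_assoc, binomialCDF_sub_binomialCDF_succ]
  · simp

section PoissonLimit

variable {ι : Type*} {l : Filter ι}

theorem tendsto_one_add_pow_of_tendsto_mul {u : ι → ℝ} {n : ι → ℕ} {L : ℝ}
    (hu : Tendsto u l (𝓝 0)) (hnu : Tendsto (fun i => n i * u i) l (𝓝 L)) :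
    Tendsto (fun i => (1 + u i) ^ n i) l (𝓝 (Real.exp L)) := by
  have hpos : ∀ᶠ i in l, 0 < 1 + u i := by
    filter_upwards [hu.eventually_const_lt (show (-1 : ℝ) < 0 by norm_num)] with i hi
    linarith
  have hlower : Tendsto (fun i => Real.exp (n i * u i * (1 + u i)⁻¹)) l (𝓝 (Real.exp L)) := by
    have h1u : Tendsto (fun i => (1 + u i)⁻¹) l (𝓝 1) := by
      simpa using (tendsto_const_nhds (x := (1 : ℝ)).add hu).inv₀ (by norm_num)
    simpa using (hnu.mul h1u).rexp
  have hupper : Tendsto (fun i => Real.exp (n i * u i)) l (𝓝 (Real.exp L)) :=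
    hnu.rexp
  refine tendsto_of_tendsto_of_tendsto_of_le_of_le' hlower hupper ?_ ?_
  · filter_upwards [hpos] with i hi
    have hlog : u i * (1 + u i)⁻¹ ≤ Real.log (1 + u i) := by
      convert Real.one_sub_inv_le_log_of_pos hi using 1
      field_simp
      ring
    calc Real.exp (n i * u i * (1 + u i)⁻¹)
        ≤ Real.exp (n i * Real.log (1 + u i)) := by
          rw [mul_assoc]; gcongr
      _ = (1 + u i) ^ n i := by rw [Real.exp_nat_mul, Real.exp_log hi]
  · filter_upwards [hpos] with i hi
    calc (1 + u i) ^ n i ≤ Real.exp (u i) ^ n i := by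
          gcongr; linarith [Real.add_one_le_exp (u i)]
      _ = Real.exp (n i * u i) := (Real.exp_nat_mul _ _).symm

-- Mathlib's `ProbabilityTheory.tendsto_choose_mul_pow_of_tendsto_mul_atTop` is the case
-- `l = atTop`, `n = id`; here `n` and `u` are both driven by an external parameter.
theorem tendsto_choose_mul_pow_of_tendsto_mul {u : ι → ℝ} {n : ι → ℕ} {w : ℝ}
    (hn : Tendsto n l atTop) (hnu : Tendsto (fun i => n i * u i) l (𝓝 w)) (j : ℕ) :
    Tendsto (fun i => (n i).choose j * u i ^ j * (1 - u i) ^ (n i - j)) l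
      (𝓝 (Real.exp (-w) * w ^ j / j.factorial)) := by
  have hu : Tendsto u l (𝓝 0) := by
    have h := hnu.mul (tendsto_inv_atTop_zero.comp (tendsto_natCast_atTop_atTop.comp hn))
    rw [mul_zero] at h
    refine h.congr' ?_
    filter_upwards [hn.eventually_ge_atTop 1] with i hi
    have : (n i : ℝ) ≠ 0 := by positivity
    simp [field]
  have hchoose : Tendsto (fun i => ((n i).choose j : ℝ) * u i ^ j) l
      (𝓝 (w ^ j / j.factorial)) := by
    have hequiv : (fun i => ((n i).choose j : ℝ) * u i ^ j)
        ~[l] fun i => (n i * u i) ^ j / j.factorial :=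
      (((isEquivalent_choose j).comp_tendsto hn).mul Asymptotics.IsEquivalent.refl).congr_right
        (.of_eq (by ext; simp only [Pi.mul_apply, Function.comp_apply]; ring))
    exact hequiv.tendsto_nhds_iff.mpr ((hnu.pow j).div_const _)
  have hpow : Tendsto (fun i => (1 + -u i) ^ (n i - j)) l (𝓝 (Real.exp (-w))) := by
    refine tendsto_one_add_pow_of_tendsto_mul (by simpa using hu.neg) ?_
    have h := (hnu.sub (hu.const_mul (j : ℝ))).neg
    rw [mul_zero, sub_zero] at h
    refine h.congr' ?_
    filter_upwards [hn.eventually_ge_atTop j] with i hi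
    push_cast [hi]
    ring
  simpa [← sub_eq_add_neg, mul_div_right_comm, mul_comm (Real.exp _)] using hchoose.mul hpow

theorem tendsto_binomialCDF_of_tendsto_mul {u : ι → ℝ} {n : ι → ℕ} {w : ℝ}
    (hn : Tendsto n l atTop) (hnu : Tendsto (fun i => n i * u i) l (𝓝 w)) (k : ℕ) :
    Tendsto (fun i => binomialCDF (u i) (n i) k) l
      (𝓝 (∑ j ∈ Finset.range (k + 1), Real.exp (-w) * w ^ j / j.factorial)) :=
  tendsto_finsetSum _ fun j _ => tendsto_choose_mul_pow_of_tendsto_mul hn hnu j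

end PoissonLimit

theorem hasDerivAt_sum_range_pow_div_factorial (k : ℕ) (v : ℝ) :
    HasDerivAt (fun v : ℝ => ∑ j ∈ Finset.range (k + 1), v ^ j / j.factorial)
      (∑ j ∈ Finset.range k, v ^ j / j.factorial) v := by
  induction k with
  | zero => simpa using hasDerivAt_const v (1 : ℝ)
  | succ k ih =>
    have hterm : HasDerivAt (fun v : ℝ => v ^ (k + 1) / (k + 1).factorial)
        (v ^ k / k.factorial) v := by
      refine ((hasDerivAt_pow (k + 1) v).div_const _).congr_deriv ?_
      rw [Nat.factorial_succ]
      push_cast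
      field_simp
    simpa only [← Finset.sum_range_succ] using ih.fun_add hterm

theorem integral_Ioi_pow_mul_exp_neg (k : ℕ) {w : ℝ} (hw : 0 ≤ w) :
    ∫ v in Ioi w, v ^ k * Real.exp (-v)
      = k.factorial * ∑ j ∈ Finset.range (k + 1), Real.exp (-w) * w ^ j / j.factorial := by
  let F : ℝ → ℝ := fun v =>
    -(k.factorial * (Real.exp (-v) * ∑ j ∈ Finset.range (k + 1), v ^ j / j.factorial))
  have hderiv : ∀ v, HasDerivAt F (v ^ k * Real.exp (-v)) v := by
    intro v
    refine ((((Real.hasDerivAt_exp (-v)).comp v (hasDerivAt_neg v)).mul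
      (hasDerivAt_sum_range_pow_div_factorial k v)).const_mul (k.factorial : ℝ) |>.neg)
      |>.congr_deriv ?_
    simp only [Function.comp_apply, Finset.sum_range_succ _ k]
    field_simp
    ring
  have hlim : Tendsto F atTop (𝓝 0) := by
    have h := tendsto_finsetSum (Finset.range (k + 1)) fun j _ =>
      (Real.tendsto_pow_mul_exp_neg_atTop_nhds_zero j).div_const (j.factorial : ℝ)
    refine Tendsto.congr (fun v => ?_) (by simpa using (h.const_mul (k.factorial : ℝ)).neg)
    simp only [F, Finset.mul_sum, neg_inj]
    exact Finset.sum_congr rfl fun j _ => by ring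
  rw [integral_Ioi_of_hasDerivAt_of_nonneg' (fun v _ => hderiv v)
    (fun v hv => by have : 0 ≤ v := hw.trans hv.le; positivity) hlim]
  simp [F, Finset.mul_sum, mul_div_assoc]

section IIDCounts

variable {α Ω : Type*} {B D C : Set α} {m : ℕ} {S : Finset ℕ} {X : ℕ → Ω → α}

def countCell (B D C : Set α) (m : ℕ) (S : Finset ℕ) (i : ℕ) : Set α :=
  if i = m then C else if i ∈ S then B else D \ B

theorem forall_mem_countCell_iff [DecidablePred (· ∈ B)] (hBD : B ⊆ D)
    (hS : S ⊆ Finset.range m) (x : ℕ → α) :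
    (∀ i ∈ Finset.range (m + 1), x i ∈ countCell B D C m S i)
      ↔ (∀ i < m, x i ∈ D) ∧ (Finset.range m).filter (fun i => x i ∈ B) = S ∧ x m ∈ C := by
  simp only [Finset.mem_range, Nat.lt_succ_iff_lt_or_eq, or_imp, forall_and, forall_eq,
    countCell, if_pos]
  have hS' : ∀ i ∈ S, i < m := fun i hi => Finset.mem_range.mp (hS hi)
  constructor
  · rintro ⟨hlt, hC⟩
    have hcell : ∀ i < m, x i ∈ (if i ∈ S then B else D \ B) := fun i hi => by
      simpa [hi.ne] using hlt i hi
    refine ⟨fun i hi => ?_, ?_, hC⟩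
    · have := hcell i hi
      split_ifs at this
      exacts [hBD this, this.1]
    · ext i
      simp only [Finset.mem_filter, Finset.mem_range]
      constructor
      · rintro ⟨hi, hxB⟩
        by_contra hiS
        have := hcell i hi
        rw [if_neg hiS] at this
        exact this.2 hxB
      · intro hiS
        have := hcell i (hS' i hiS)
        rw [if_pos hiS] at this
        exact ⟨hS' i hiS, this⟩
  · rintro ⟨hxD, rfl, hC⟩
    refine ⟨fun i hi => ?_, hC⟩
    by_cases hxB : x i ∈ B <;> simp [hi.ne, hi, hxB, hxD i hi]

def countEvent (X : ℕ → Ω → α) (B D C : Set α) [DecidablePred (· ∈ B)] (m k : ℕ) : Set Ω :=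
  {ω | (∀ i < m, X i ω ∈ D) ∧ ((Finset.range m).filter fun i => X i ω ∈ B).card = k
    ∧ X m ω ∈ C}

theorem countEvent_eq_biUnion [DecidablePred (· ∈ B)] (hBD : B ⊆ D) (m k : ℕ) :
    countEvent X B D C m k = ⋃ S ∈ Finset.powersetCard k (Finset.range m),
      ⋂ i ∈ Finset.range (m + 1), X i ⁻¹' countCell B D C m S i := by
  ext ω
  simp only [countEvent, Set.mem_ofPred_eq, Set.mem_iUnion, Set.mem_iInter, Set.mem_preimage,
    exists_prop, Finset.mem_powersetCard]
  constructor
  · rintro ⟨hωD, hcard, hωC⟩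
    exact ⟨_, ⟨Finset.filter_subset _ _, hcard⟩,
      (forall_mem_countCell_iff hBD (Finset.filter_subset _ _) _).mpr ⟨hωD, rfl, hωC⟩⟩
  · rintro ⟨S, ⟨hS, rfl⟩, hω⟩
    obtain ⟨hωD, hfilter, hωC⟩ := (forall_mem_countCell_iff hBD hS _).mp hω
    exact ⟨hωD, by rw [hfilter], hωC⟩

variable [MeasurableSpace α] [MeasurableSpace Ω] {P : Measure Ω} {μ : Measure α}

theorem measurableSet_countCell (hB : MeasurableSet B) (hD : MeasurableSet D)
    (hC : MeasurableSet C) (i : ℕ) : MeasurableSet (countCell B D C m S i) := by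
  unfold countCell
  split_ifs
  exacts [hC, hB, hD.diff hB]

theorem measure_iInter_preimage_countCell (hindep : iIndepFun X P)
    (hX : ∀ i, AEMeasurable (X i) P) (hdist : ∀ i, P.map (X i) = μ) (hB : MeasurableSet B)
    (hD : MeasurableSet D) (hC : MeasurableSet C) (hS : S ⊆ Finset.range m) :
    P (⋂ i ∈ Finset.range (m + 1), X i ⁻¹' countCell B D C m S i)
      = μ B ^ S.card * μ (D \ B) ^ (m - S.card) * μ C := by
  have hcell := measurableSet_countCell (m := m) (S := S) hB hD hC
  have hS_filter : (Finset.range m).filter (· ∈ S) = S := by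
    rw [Finset.filter_mem_eq_inter, Finset.inter_eq_right.mpr hS]
  have hprod : ∏ i ∈ Finset.range m, μ (countCell B D C m S i)
      = μ B ^ S.card * μ (D \ B) ^ (m - S.card) := by
    rw [Finset.prod_congr rfl fun i hi => by rw [countCell, if_neg (Finset.mem_range.mp hi).ne],
      Finset.prod_apply_ite, Finset.prod_const, Finset.prod_const, hS_filter, Finset.filter_not,
      hS_filter, Finset.card_sdiff_of_subset hS, Finset.card_range]
  have hlaw : ∀ i, P (X i ⁻¹' countCell B D C m S i) = μ (countCell B D C m S i) := fun i => by
    rw [← hdist i, Measure.map_apply_of_aemeasurable (hX i) (hcell i)]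
  rw [hindep.measure_inter_preimage_eq_mul _ fun i _ => hcell i,
    Finset.prod_congr rfl fun i _ => hlaw i, Finset.prod_range_succ, hprod, countCell, if_pos rfl]

theorem nullMeasurableSet_countEvent [DecidablePred (· ∈ B)] (hX : ∀ i, AEMeasurable (X i) P)
    (hB : MeasurableSet B) (hD : MeasurableSet D) (hC : MeasurableSet C) (hBD : B ⊆ D)
    (m k : ℕ) : NullMeasurableSet (countEvent X B D C m k) P := by
  rw [countEvent_eq_biUnion hBD]
  exact Finset.nullMeasurableSet_biUnion _ fun S _ => Finset.nullMeasurableSet_biInter _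
    fun i _ => (hX i).nullMeasurable (measurableSet_countCell hB hD hC i)

theorem measure_countEvent [DecidablePred (· ∈ B)] (hindep : iIndepFun X P)
    (hX : ∀ i, AEMeasurable (X i) P) (hdist : ∀ i, P.map (X i) = μ) (hB : MeasurableSet B)
    (hD : MeasurableSet D) (hC : MeasurableSet C) (hBD : B ⊆ D) (m k : ℕ) :
    P (countEvent X B D C m k) = m.choose k * (μ B ^ k * μ (D \ B) ^ (m - k) * μ C) := by
  have hdisj : Set.PairwiseDisjoint ↑(Finset.powersetCard k (Finset.range m))
      fun S => ⋂ i ∈ Finset.range (m + 1), X i ⁻¹' countCell B D C m S i := by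
    intro S hS S' hS' hne
    refine Set.disjoint_left.mpr fun ω hω hω' => hne ?_
    simp only [Set.mem_iInter, Set.mem_preimage] at hω hω'
    rw [← ((forall_mem_countCell_iff hBD (Finset.mem_powersetCard.mp hS).1 _).mp hω).2.1,
      ((forall_mem_countCell_iff hBD (Finset.mem_powersetCard.mp hS').1 _).mp hω').2.1]
  rw [countEvent_eq_biUnion hBD, measure_biUnion_finset₀
    (fun S hS S' hS' hne => (hdisj hS hS' hne).aedisjoint)
    fun S _ => Finset.nullMeasurableSet_biInter _ fun i _ =>
      (hX i).nullMeasurable (measurableSet_countCell hB hD hC i),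
    Finset.sum_congr rfl fun S hS => by
      rw [measure_iInter_preimage_countCell hindep hX hdist hB hD hC
        (Finset.mem_powersetCard.mp hS).1, (Finset.mem_powersetCard.mp hS).2],
    Finset.sum_const, Finset.card_powersetCard, Finset.card_range, nsmul_eq_mul]

end IIDCounts

section Survival

variable {μ : Measure ℝ}

theorem survival_anti [IsFiniteMeasure μ] : Antitone (survival μ) := fun _ _ h =>
  measureReal_mono (Ioi_subset_Ioi h)

variable [NullSingletonClass μ]

theorem measureReal_Ici_eq_survival (x : ℝ) : μ.real (Ici x) = survival μ x :=
  (measureReal_congr Ioi_ae_eq_Ici).symm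

theorem measureReal_Ico_eq_survival_sub [IsFiniteMeasure μ] {x y : ℝ} (h : x ≤ y) :
    μ.real (Ico x y) = survival μ x - survival μ y := by
  rw [← Ici_sdiff_Ici, measureReal_sdiff (Ici_subset_Ici.mpr h) measurableSet_Ici,
    measureReal_Ici_eq_survival, measureReal_Ici_eq_survival]

theorem measureReal_Iio_eq_one_sub_survival [IsProbabilityMeasure μ] (x : ℝ) :
    μ.real (Iio x) = 1 - survival μ x := by
  rw [← compl_Ici, probReal_compl_eq_one_sub measurableSet_Ici, measureReal_Ici_eq_survival]

end Survival

section ShockCounts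

variable {γ β α : ℝ} {b c : ℕ → ℝ} {X : ℕ → ℝ}

theorem shockCounts_snd_monotone : Monotone fun n => (shockCounts γ β α b c X n).2 :=
  monotone_nat_of_le_succ fun n => by simp only [shockCounts]; split <;> simp

theorem shockCounts_eq_of_forall_lt {n : ℕ} (h : ∀ i < n, X i < β) :
    shockCounts γ β α b c X n = (((Finset.range n).filter fun i => X i ∈ Ico γ β).card, 0) := by
  induction n with
  | zero => rfl
  | succ n ih =>
    have hXn : ¬ β ≤ X n := not_le.mpr (h n n.lt_succ_self)
    rw [shockCounts, ih fun i hi => h i (hi.trans n.lt_succ_self), Finset.range_add_one,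
      Finset.filter_insert]
    by_cases hγ : γ ≤ X n
    · simp [hXn, hγ, h n n.lt_succ_self]
    · simp [hXn, hγ]

theorem forall_lt_of_shockCounts_snd_eq_zero {m : ℕ} (hm : (shockCounts γ β α b c X m).2 = 0)
    (hf : ∀ i < m, ¬ fatalShock γ β α b c X i) : ∀ i < m, X i < β := by
  intro i hi
  by_contra hβi
  have hstep : (shockCounts γ β α b c X (i + 1)).2 = (shockCounts γ β α b c X i).2 + 1 := by
    simp only [shockCounts]
    rw [if_pos ⟨not_lt.mp hβi, not_le.mp (hf i hi)⟩]
  have hle : (shockCounts γ β α b c X (i + 1)).2 ≤ (shockCounts γ β α b c X m).2 :=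
    shockCounts_snd_monotone (Nat.succ_le_of_lt hi)
  omega

theorem exists_fatalShock_and_nuShock_eq_iff (m : ℕ) :
    ((∃ i, fatalShock γ β α b c X i) ∧ nuShock γ β α b c X = m)
      ↔ fatalShock γ β α b c X m ∧ ∀ i < m, ¬ fatalShock γ β α b c X i := by
  constructor
  · rintro ⟨hex, rfl⟩
    exact ⟨Nat.sInf_mem hex, fun i hi => Nat.notMem_of_lt_sInf hi⟩
  · rintro ⟨hm, hlt⟩
    exact ⟨⟨m, hm⟩, le_antisymm (Nat.sInf_le hm)
      (le_csInf ⟨m, hm⟩ fun i hi => not_lt.mp fun h => hlt i h hi)⟩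

theorem firstFatal_iff (hβα : ∀ k l, β ≤ α + b k - c l) (m k : ℕ) :
    ((∃ i, fatalShock γ β α b c X i) ∧ nuShock γ β α b c X = m
        ∧ shockCounts γ β α b c X (nuShock γ β α b c X) = (k, 0))
      ↔ (∀ i < m, X i ∈ Iio β) ∧ ((Finset.range m).filter fun i => X i ∈ Ico γ β).card = k
        ∧ X m ∈ Ici (α + b k - c 0) := by
  constructor
  · rintro ⟨hex, rfl, hcounts⟩
    obtain ⟨hfatal, hbefore⟩ := (exists_fatalShock_and_nuShock_eq_iff _).mp ⟨hex, rfl⟩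
    have hβ := forall_lt_of_shockCounts_snd_eq_zero (by rw [hcounts]) hbefore
    rw [shockCounts_eq_of_forall_lt hβ, Prod.mk.injEq] at hcounts
    refine ⟨hβ, hcounts.1, ?_⟩
    have := hfatal
    rwa [fatalShock, shockCounts_eq_of_forall_lt hβ, hcounts.1] at this
  · rintro ⟨hβ, hcard, hX⟩
    have hcounts : shockCounts γ β α b c X m = (k, 0) := by
      rw [shockCounts_eq_of_forall_lt hβ, hcard]
    have hfatal : fatalShock γ β α b c X m := by
      rw [fatalShock, hcounts]
      exact hX
    obtain ⟨hex, hν⟩ := (exists_fatalShock_and_nuShock_eq_iff m).mpr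
      ⟨hfatal, fun i hi hf => (not_le.mpr (hβ i hi)) ((hβα _ _).trans hf)⟩
    exact ⟨hex, hν, hν ▸ hcounts⟩

end ShockCounts

section ShockProbability

variable {Ω : Type*} {X : ℕ → Ω → ℝ} {γ β α : ℝ} {b c : ℕ → ℝ}

theorem setOf_firstFatal_eq_countEvent (hβα : ∀ k l, β ≤ α + b k - c l) (m k : ℕ) :
    {ω | (∃ i, fatalShock γ β α b c (fun j => X j ω) i)
        ∧ nuShock γ β α b c (fun j => X j ω) = m
        ∧ shockCounts γ β α b c (fun j => X j ω) (nuShock γ β α b c (fun j => X j ω)) = (k, 0)}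
      = countEvent X (Ico γ β) (Iio β) (Ici (α + b k - c 0)) m k :=
  Set.ext fun _ => firstFatal_iff hβα m k

variable [MeasurableSpace Ω] {P : Measure Ω} {μ : Measure ℝ} [IsProbabilityMeasure μ]
  [NullSingletonClass μ]

theorem measureReal_firstFatal_eq (hindep : iIndepFun X P) (hX : ∀ i, AEMeasurable (X i) P)
    (hdist : ∀ i, P.map (X i) = μ) (hγβ : γ ≤ β) (hβα : ∀ k l, β ≤ α + b k - c l) (m k : ℕ) :
    P.real {ω | (∃ i, fatalShock γ β α b c (fun j => X j ω) i)
        ∧ nuShock γ β α b c (fun j => X j ω) = m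
        ∧ shockCounts γ β α b c (fun j => X j ω) (nuShock γ β α b c (fun j => X j ω)) = (k, 0)}
      = m.choose k * ((survival μ γ - survival μ β) ^ k * (1 - survival μ γ) ^ (m - k)
          * survival μ (α + b k - c 0)) := by
  have hIio : Iio β \ Ico γ β = Iio γ := by
    ext x
    simp only [Set.mem_sdiff, mem_Iio, mem_Ico]
    constructor
    · rintro ⟨hxβ, h⟩
      exact not_le.mp fun hγx => h ⟨hγx, hxβ⟩
    · exact fun hxγ => ⟨hxγ.trans_le hγβ, fun h => hxγ.not_ge h.1⟩
  rw [setOf_firstFatal_eq_countEvent hβα, measureReal_def, measure_countEvent hindep hX hdist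
    measurableSet_Ico measurableSet_Iio measurableSet_Ici Ico_subset_Iio_self, hIio]
  simp only [ENNReal.toReal_mul, ENNReal.toReal_pow, ENNReal.toReal_natCast, ← measureReal_def,
    measureReal_Ico_eq_survival_sub hγβ, measureReal_Iio_eq_one_sub_survival,
    measureReal_Ici_eq_survival]

theorem measureReal_firstFatal_tail_eq [IsFiniteMeasure P] (hindep : iIndepFun X P)
    (hX : ∀ i, AEMeasurable (X i) P) (hdist : ∀ i, P.map (X i) = μ) (hγβ : γ ≤ β)
    (hβα : ∀ k l, β ≤ α + b k - c l) (hγ : 0 < survival μ γ) (R : ℝ) (k : ℕ) :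
    P.real {ω | (∃ i, fatalShock γ β α b c (fun j => X j ω) i)
        ∧ R ≤ (nuShock γ β α b c (fun j => X j ω) : ℝ) + 1
        ∧ shockCounts γ β α b c (fun j => X j ω) (nuShock γ β α b c (fun j => X j ω)) = (k, 0)}
      = binomialCDF (survival μ γ) ⌈R - 1⌉₊ k * ((survival μ γ - survival μ β) ^ k
          * survival μ (α + b k - c 0) / survival μ γ ^ (k + 1)) := by
  set M := ⌈R - 1⌉₊
  let E : ℕ → Set Ω := fun m => {ω | (∃ i, fatalShock γ β α b c (fun j => X j ω) i)
    ∧ nuShock γ β α b c (fun j => X j ω) = m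
    ∧ shockCounts γ β α b c (fun j => X j ω) (nuShock γ β α b c (fun j => X j ω)) = (k, 0)}
  have hunion : {ω | (∃ i, fatalShock γ β α b c (fun j => X j ω) i)
        ∧ R ≤ (nuShock γ β α b c (fun j => X j ω) : ℝ) + 1
        ∧ shockCounts γ β α b c (fun j => X j ω) (nuShock γ β α b c (fun j => X j ω)) = (k, 0)}
      = ⋃ m, E (M + m) := by
    ext ω
    simp only [E, Set.mem_ofPred_eq, Set.mem_iUnion, ← sub_le_iff_le_add, ← Nat.ceil_le]
    constructor
    · rintro ⟨hex, hM, hcounts⟩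
      exact ⟨_, hex, (Nat.add_sub_cancel' hM).symm, hcounts⟩
    · rintro ⟨m, hex, hν, hcounts⟩
      exact ⟨hex, hν ▸ Nat.le_add_right M m, hcounts⟩
  have hdisj : Pairwise (Function.onFun Disjoint fun m => E (M + m)) := fun m m' hne =>
    Set.disjoint_left.mpr fun ω h h' => hne (Nat.add_left_cancel (h.2.1.symm.trans h'.2.1))
  have hmeas : ∀ m, NullMeasurableSet (E m) P := fun m => by
    rw [show E m = _ from setOf_firstFatal_eq_countEvent hβα m k]
    exact nullMeasurableSet_countEvent hX measurableSet_Ico measurableSet_Iio measurableSet_Ici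
      Ico_subset_Iio_self m k
  have hterm : ∀ m, (P (E (M + m))).toReal = (M + m).choose k * survival μ γ ^ (k + 1)
      * (1 - survival μ γ) ^ (M + m - k) * ((survival μ γ - survival μ β) ^ k
        * survival μ (α + b k - c 0) / survival μ γ ^ (k + 1)) := fun m => by
    rw [← measureReal_def, measureReal_firstFatal_eq hindep hX hdist hγβ hβα]
    field_simp
  rw [hunion, measureReal_def, measure_iUnion₀ (hdisj.mono fun _ _ h => h.aedisjoint)
    fun m => hmeas _, ENNReal.tsum_toReal_eq fun _ => measure_ne_top _ _, tsum_congr hterm]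
  exact ((hasSum_choose_mul_pow_binomialCDF hγ measureReal_le_one M k).mul_right _).tsum_eq

end ShockProbability

section Scaling

variable {ι : Type*} {l : Filter ι} {s : ι → ℝ} {z : ℝ}

theorem tendsto_natCeil_div_sub_one_mul (hs : Tendsto s l (𝓝[>] 0)) (hz : 0 ≤ z) :
    Tendsto (fun i => (⌈z / s i - 1⌉₊ : ℝ) * s i) l (𝓝 z) := by
  have hs0 : Tendsto s l (𝓝 0) := tendsto_nhds_of_tendsto_nhdsWithin hs
  refine tendsto_of_tendsto_of_tendsto_of_le_of_le' (g := fun i => z - s i)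
    (by simpa using tendsto_const_nhds.sub hs0) tendsto_const_nhds ?_ ?_
  all_goals filter_upwards [tendsto_nhdsWithin_iff.mp hs |>.2] with i (hi : 0 < s i)
  · calc z - s i = (z / s i - 1) * s i := by field_simp
      _ ≤ _ := mul_le_mul_of_nonneg_right (Nat.le_ceil _) hi.le
  · rcases le_or_gt 0 (z / s i - 1) with h | h
    · calc (⌈z / s i - 1⌉₊ : ℝ) * s i ≤ (z / s i) * s i := by
            gcongr
            linarith [Nat.ceil_lt_add_one h]
        _ = z := by field_simp
    · simp [Nat.ceil_eq_zero.mpr h.le, hz]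

theorem tendsto_natCeil_div_sub_one (hs : Tendsto s l (𝓝[>] 0)) (hz : 0 < z) :
    Tendsto (fun i => ⌈z / s i - 1⌉₊) l atTop :=
  tendsto_nat_ceil_atTop.comp <| tendsto_atTop_add_const_right _ (-1)
    ((tendsto_inv_nhdsGT_zero.comp hs).const_mul_atTop hz)

theorem eventually_pos_of_tendsto_div {u : ι → ℝ} {g : ℝ} (hs : ∀ i, 0 ≤ s i)
    (h : Tendsto (fun i => s i / u i) l (𝓝 g)) (hg : 0 < g) : ∀ᶠ i in l, 0 < s i := by
  filter_upwards [h.eventually_const_lt hg] with i hi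
  exact (hs i).lt_of_ne fun h0 => by simp [← h0] at hi

theorem tendsto_sub_pow_mul_div_pow {u r : ι → ℝ} {g a : ℝ}
    (hsu : Tendsto (fun i => s i / u i) l (𝓝 g)) (hrs : Tendsto (fun i => r i / s i) l (𝓝 a))
    (hs : ∀ᶠ i in l, s i ≠ 0) (hu : ∀ᶠ i in l, u i ≠ 0) (k : ℕ) :
    Tendsto (fun i => (u i - s i) ^ k * r i / u i ^ (k + 1)) l (𝓝 ((1 - g) ^ k * (a * g))) := by
  refine (((tendsto_const_nhds.sub hsu).pow k).mul (hrs.mul hsu)).congr' ?_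
  filter_upwards [hs, hu] with i hsi hui
  rw [one_sub_div hui, div_pow]
  field_simp
  ring

end Scaling

theorem shock_tail_asymptotic_zero_general
    {Ω : Type*} [MeasurableSpace Ω] (P : Measure Ω) [IsProbabilityMeasure P]
    (μ : Measure ℝ) [IsProbabilityMeasure μ]
    (X : ℕ → Ω → ℝ)
    (hindep : iIndepFun X P)
    (hdist : ∀ i, Measure.map (X i) P = μ)
    (hcont : ∀ x : ℝ, μ {x} = 0)
    (γ β α : ℝ → ℝ) (b c : ℝ → ℕ → ℝ)
    (hγβ : ∀ t, γ t < β t)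
    (hβα : ∀ t, ∀ k l : ℕ, β t ≤ α t + b t k - c t l)
    (hβ0 : Tendsto (fun t => survival μ (β t)) atTop (nhds 0))
    (g : ℝ) (hg : g ∈ Set.Ioo (0 : ℝ) 1)
    (hgt : Tendsto (fun t => survival μ (β t) / survival μ (γ t)) atTop (nhds g))
    (a : ℕ → ℕ → ℝ)
    (hat : ∀ k l : ℕ, Tendsto
      (fun t => survival μ (α t + b t k - c t l) / survival μ (β t)) atTop (nhds (a k l)))
    (k : ℕ) (z : ℝ) (hz : 0 < z) :
    Tendsto (fun t =>
        (P {ω | (∃ i, fatalShock (γ t) (β t) (α t) (b t) (c t) (fun j => X j ω) i) ∧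
          z / survival μ (β t)
            ≤ (nuShock (γ t) (β t) (α t) (b t) (c t) (fun j => X j ω) : ℝ) + 1 ∧
          (shockCounts (γ t) (β t) (α t) (b t) (c t) (fun j => X j ω)
            (nuShock (γ t) (β t) (α t) (b t) (c t) (fun j => X j ω))) = (k, 0)}).toReal)
      atTop
      (nhds (g * (1 - g) ^ k * a k 0 / (k.factorial : ℝ)
        * ∫ v in Set.Ioi (z / g), v ^ k * Real.exp (-v))) := by
  have : NullSingletonClass μ := ⟨hcont⟩
  have hX : ∀ i, AEMeasurable (X i) P := fun i =>
    .of_map_ne_zero (by rw [hdist i]; exact IsProbabilityMeasure.ne_zero μ)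
  have hβ_pos : ∀ᶠ t in atTop, 0 < survival μ (β t) :=
    eventually_pos_of_tendsto_div (fun _ => measureReal_nonneg) hgt hg.1
  have hγ_pos : ∀ᶠ t in atTop, 0 < survival μ (γ t) :=
    hβ_pos.mono fun t ht => ht.trans_le (survival_anti (hγβ t).le)
  have hβ0' : Tendsto (fun t => survival μ (β t)) atTop (𝓝[>] 0) :=
    tendsto_nhdsWithin_iff.mpr ⟨hβ0, hβ_pos⟩
  have hMγ : Tendsto (fun t => (⌈z / survival μ (β t) - 1⌉₊ : ℝ) * survival μ (γ t)) atTop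
      (𝓝 (z / g)) := by
    refine ((tendsto_natCeil_div_sub_one_mul hβ0' hz.le).div hgt hg.1.ne').congr' ?_
    filter_upwards [hβ_pos] with t ht
    simp only [Pi.div_apply]
    generalize (⌈z / survival μ (β t) - 1⌉₊ : ℝ) = C
    field_simp
  have hlimit : g * (1 - g) ^ k * a k 0 / (k.factorial : ℝ)
        * ∫ v in Set.Ioi (z / g), v ^ k * Real.exp (-v)
      = (∑ j ∈ Finset.range (k + 1), Real.exp (-(z / g)) * (z / g) ^ j / j.factorial)
        * ((1 - g) ^ k * (a k 0 * g)) := by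
    rw [integral_Ioi_pow_mul_exp_neg k (div_pos hz hg.1).le]
    field_simp
  rw [hlimit]
  have hprob : ∀ᶠ t in atTop, _ := hγ_pos.mono fun t ht =>
    (measureReal_firstFatal_tail_eq hindep hX hdist (hγβ t).le (hβα t) ht
      (z / survival μ (β t)) k).symm
  exact ((tendsto_binomialCDF_of_tendsto_mul (tendsto_natCeil_div_sub_one hβ0' hz) hMγ k).mul
    (tendsto_sub_pow_mul_div_pow hgt (hat k 0) (hβ_pos.mono fun _ h => h.ne')
      (hγ_pos.mono fun _ h => h.ne') k)).congr' hprob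

/-- for `k ≥ 0`, `z > 0` and `z_β = z/F̄(β(t))`,
`P{ν ≥ z_β, N₊(ν)=k, N₋(ν)=0} → (g(1-g)^k a_{k,0}/k!) ∫_{z/g}^∞ v^k e^{-v} dv`. -/
theorem shock_tail_asymptotic_zero
    {Ω : Type*} [MeasurableSpace Ω] (P : Measure Ω) [IsProbabilityMeasure P]
    (μ : Measure ℝ) [IsProbabilityMeasure μ]
    (X : ℕ → Ω → ℝ)
    (hindep : iIndepFun X P)
    (hdist : ∀ i, Measure.map (X i) P = μ)
    (hcont : ∀ x : ℝ, μ {x} = 0)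
    (γ β α : ℝ → ℝ) (b c : ℝ → ℕ → ℝ)
    (hγβ : ∀ t, γ t < β t)
    (hb : ∀ t, Monotone (b t)) (hc : ∀ t, Monotone (c t))
    (hb0 : ∀ t, b t 0 = 0) (hc0 : ∀ t, c t 0 = 0)
    (hβα : ∀ t, ∀ k l : ℕ, β t ≤ α t + b t k - c t l)
    (hγpos : ∀ t, 0 < survival μ (γ t)) (hβpos : ∀ t, 0 < survival μ (β t))
    (hβ0 : Tendsto (fun t => survival μ (β t)) atTop (nhds 0))
    (g : ℝ) (hg : g ∈ Set.Ioo (0 : ℝ) 1)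
    (hgt : Tendsto (fun t => survival μ (β t) / survival μ (γ t)) atTop (nhds g))
    (a : ℕ → ℕ → ℝ) (ha : ∀ k l, a k l ∈ Set.Ioc (0 : ℝ) 1)
    (hat : ∀ k l : ℕ, Tendsto
      (fun t => survival μ (α t + b t k - c t l) / survival μ (β t)) atTop (nhds (a k l)))
    (k : ℕ) (z : ℝ) (hz : 0 < z) :
    Tendsto (fun t =>
        (P {ω | (∃ i, fatalShock (γ t) (β t) (α t) (b t) (c t) (fun j => X j ω) i) ∧
          z / survival μ (β t)
            ≤ (nuShock (γ t) (β t) (α t) (b t) (c t) (fun j => X j ω) : ℝ) + 1 ∧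
          (shockCounts (γ t) (β t) (α t) (b t) (c t) (fun j => X j ω)
            (nuShock (γ t) (β t) (α t) (b t) (c t) (fun j => X j ω))) = (k, 0)}).toReal)
      atTop
      (nhds (g * (1 - g) ^ k * a k 0 / (k.factorial : ℝ)
        * ∫ v in Set.Ioi (z / g), v ^ k * Real.exp (-v))) :=
  shock_tail_asymptotic_zero_general P μ X hindep hdist hcont γ β α b c hγβ hβα hβ0 g hg hgt a hat k
    z hz
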